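/- Let a > 0 and let f : ℝ → ℂ be a Schwartz function. Then for every z ∈ ℂ, [B_{a/2}( f′ − a·x·f )](z) = −a·z·(B_{a/2}f)(z); that is, the Bargmann transform intertwines the generalized real Dirac operator d_x^a = ∂/∂x − a·x with multiplication by −a·z. -/

import Mathlib

/-!
The kernel `K(x) = e^{axz − (a/2)x² − (a/4)z²}` satisfies `∂ₓK = (az − ax)K`, so
`(fK)' = (f' − axf)K + az·fK`. For Schwartz `f` both terms are integrable (bounded functions
times the Gaussian `K`), hence the integral of `(fK)'` over `ℝ` vanishes, which is the claim.
-/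

open Complex Real SchwartzMap
open MeasureTheory

/-- The (parametrized) Bargmann transform `B_{a/2}`:
`(B_{a/2}f)(z) = (a/π)^{1/4} ∫_ℝ f(x) e^{axz − (a/2)x² − (a/4)z²} dx`. -/
noncomputable def bargmann (a : ℝ) (f : ℝ → ℂ) (z : ℂ) : ℂ :=
  ((a / Real.pi) ^ ((1 : ℝ) / 4) : ℝ) *
    ∫ x : ℝ, f x * Complex.exp (a * x * z - (a / 2) * x ^ 2 - (a / 4) * z ^ 2)

noncomputable def bargmannKernel (a : ℝ) (z : ℂ) (x : ℝ) : ℂ :=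
  Complex.exp (a * x * z - (a / 2) * x ^ 2 - (a / 4) * z ^ 2)

theorem bargmann_eq_integral_mul_bargmannKernel (a : ℝ) (f : ℝ → ℂ) (z : ℂ) :
    bargmann a f z =
      ((a / Real.pi) ^ ((1 : ℝ) / 4) : ℝ) * ∫ x : ℝ, f x * bargmannKernel a z x :=
  rfl

theorem hasDerivAt_bargmannKernel (a : ℝ) (z : ℂ) (x : ℝ) :
    HasDerivAt (bargmannKernel a z) ((a * z - a * x) * bargmannKernel a z x) x := by
  have hx : HasDerivAt (fun y : ℝ => (y : ℂ)) 1 x := (hasDerivAt_id x).ofReal_comp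
  have hexponent : HasDerivAt
      (fun y : ℝ => (a : ℂ) * y * z - (a / 2) * (y : ℂ) ^ 2 - (a / 4) * z ^ 2)
      (a * z - a * x) x := by
    refine ((((hx.const_mul (a : ℂ)).mul_const z).sub
      ((hx.pow 2).const_mul ((a : ℂ) / 2))).sub_const ((a / 4) * z ^ 2)).congr_deriv ?_
    norm_num
    ring
  exact hexponent.cexp.congr_deriv (mul_comm _ _)

theorem integrable_bargmannKernel {a : ℝ} (ha : 0 < a) (z : ℂ) :
    Integrable (bargmannKernel a z) := by
  have hre : 0 < ((a : ℂ) / 2).re := by simpa using half_pos ha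
  refine (integrable_cexp_quadratic hre (a * z) (-(a / 4) * z ^ 2)).congr
    (ae_of_all _ fun x => ?_)
  simp only [bargmannKernel]
  ring_nf

theorem integral_dirac_mul_bargmannKernel {a : ℝ} {z : ℂ} {f f' : ℝ → ℂ}
    (hf : ∀ x, HasDerivAt f (f' x) x)
    (hdirac : Integrable fun x => (f' x - a * x * f x) * bargmannKernel a z x)
    (hfK : Integrable fun x => f x * bargmannKernel a z x) :
    ∫ x, (f' x - a * x * f x) * bargmannKernel a z x =
      -(a * z) * ∫ x, f x * bargmannKernel a z x := by
  have hderiv : ∀ x, HasDerivAt (fun y => f y * bargmannKernel a z y)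
      ((f' x - a * x * f x) * bargmannKernel a z x + a * z * (f x * bargmannKernel a z x)) x := by
    intro x
    exact ((hf x).mul (hasDerivAt_bargmannKernel a z x)).congr_deriv (by ring)
  have hzero := integral_eq_zero_of_hasDerivAt_of_integrable hderiv
    (hdirac.add (hfK.const_mul _)) hfK
  rw [integral_add hdirac (hfK.const_mul _), integral_const_mul] at hzero
  linear_combination hzero

theorem SchwartzMap.norm_deriv_sub_mul_le (f : 𝓢(ℝ, ℂ)) (a x : ℝ) :
    ‖deriv f x - a * x * f x‖ ≤
      SchwartzMap.seminorm ℂ 0 1 f + |a| * SchwartzMap.seminorm ℂ 1 0 f := by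
  have hderiv : ‖deriv f x‖ ≤ SchwartzMap.seminorm ℂ 0 1 f := by
    simpa using f.le_seminorm' ℂ 0 1 x
  have hmul : ‖x‖ * ‖f x‖ ≤ SchwartzMap.seminorm ℂ 1 0 f := by
    simpa using f.norm_pow_mul_le_seminorm ℂ 1 x
  calc ‖deriv f x - a * x * f x‖ ≤ ‖deriv f x‖ + |a| * (‖x‖ * ‖f x‖) := by
        refine (norm_sub_le _ _).trans_eq ?_
        simp [mul_assoc]
    _ ≤ _ := by gcongr

/-- [B_{a/2}(f' - a x f)](z) = -a z (B f)(z) for Schwartz f: the Bargmann transform intertwines the generalized real Dirac operator with multiplication by -a z. -/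
theorem bargmann_dirac (a : ℝ) (ha : 0 < a) (f : SchwartzMap ℝ ℂ) (z : ℂ) :
    bargmann a (fun x : ℝ => deriv (fun y : ℝ => f y) x - (a : ℂ) * (x : ℂ) * f x) z =
      -(a : ℂ) * z * bargmann a (fun x : ℝ => f x) z := by
  have hK := integrable_bargmannKernel ha z
  have hfK : Integrable fun x => f x * bargmannKernel a z x :=
    hK.bdd_mul f.continuous.aestronglyMeasurable (ae_of_all _ (f.norm_le_seminorm ℂ))
  have hdirac : Integrable fun x => (deriv f x - a * x * f x) * bargmannKernel a z x :=
    hK.bdd_mul (by fun_prop) (ae_of_all _ (f.norm_deriv_sub_mul_le a))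
  rw [bargmann_eq_integral_mul_bargmannKernel, bargmann_eq_integral_mul_bargmannKernel,
    integral_dirac_mul_bargmannKernel (fun x => f.differentiableAt.hasDerivAt) hdirac hfK]
  ring
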